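/- (Mirsky-type singular value perturbation inequality.) Let X and E be real m×n matrices, and let σ_1(M) ≥ σ_2(M) ≥ … denote the singular values of a matrix M in nonincreasing order. Then Σ_i | σ_i(X + E) − σ_i(X) | ≤ Σ_i σ_i(E) = ‖E‖*. -/

import Mathlib

theorem Matrix.isHermitian_transpose_mul_self {m n : Type*} [Fintype m]
    (A : Matrix m n ℝ) : (Matrix.transpose A * A).IsHermitian := by
  simpa [Matrix.conjTranspose_eq_transpose_of_trivial] using
    Matrix.isHermitian_conjTranspose_mul_self A

/-- The singular values of a real `m × n` matrix, in nonincreasing order: the square roots of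
the eigenvalues of `MᵀM`, sorted nonincreasingly. -/
noncomputable def singularValues {m n : ℕ} (M : Matrix (Fin m) (Fin n) ℝ) : Fin n → ℝ :=
  fun i =>
    Real.sqrt ((Matrix.isHermitian_transpose_mul_self M).eigenvalues
      (Tuple.sort (Matrix.isHermitian_transpose_mul_self M).eigenvalues i.rev))

/-- The nuclear norm of a real matrix: the sum of its singular values. -/
noncomputable def nuclearNorm {m n : ℕ} (M : Matrix (Fin m) (Fin n) ℝ) : ℝ :=
  ∑ i, singularValues M i

/-!
The symmetric dilation `[[0, Mᵀ], [M, 0]]` of `M` has the eigenvalues `±σᵢ(M)`, padded with zeros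
(Jordan–Wielandt), so both sides of the inequality are halves of the corresponding sums for the
dilations of `X + E`, `X` and `E`, and it suffices to prove `∑ |λᵢ(A) - λᵢ(B)| ≤ ∑ |λᵢ(A - B)|`
for symmetric `A`, `B`. Let `P ⪰ 0` be the positive part of `A - B`. Weyl's monotonicity
`λᵢ(A), λᵢ(B) ≤ λᵢ(B + P)` bounds the sum of the positive differences `λᵢ(A) - λᵢ(B)` by
`∑ (λᵢ(B + P) - λᵢ(B)) = tr P`; symmetrically the negative ones are bounded by `tr (P - (A - B))`,
and the two traces add up to `∑ |λᵢ(A - B)|`.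
-/

open Matrix Polynomial
open scoped MatrixOrder

namespace Matrix

theorem exists_ne_zero_forall_dotProduct_eq_zero {K n : Type*} [Field K] [Fintype n]
    [DecidableEq n] (v : n → n → K) (k : n) : ∃ x ≠ 0, ∀ i ≠ k, v i ⬝ᵥ x = 0 := by
  obtain ⟨x, hx, hvx⟩ := exists_mulVec_eq_zero_iff.mpr <|
    det_eq_zero_of_row_eq_zero (A := of fun i => if i = k then 0 else v i) k fun j => by simp
  refine ⟨x, hx, fun i hi => ?_⟩
  simpa [mulVec, hi] using congrFun hvx i

lemma dotProduct_mul_mul_star_mulVec {n : Type*} [Fintype n] (U D : Matrix n n ℝ) (x : n → ℝ) :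
    x ⬝ᵥ ((U * D * star U) *ᵥ x) = (star U *ᵥ x) ⬝ᵥ (D *ᵥ (star U *ᵥ x)) := by
  rw [← mulVec_mulVec, ← mulVec_mulVec, dotProduct_mulVec, ← mulVec_transpose,
    star_eq_conjTranspose, conjTranspose_eq_transpose_of_trivial]

lemma IsHermitian.trace_cfc {n : Type*} [Fintype n] [DecidableEq n] {A : Matrix n n ℝ}
    (hA : A.IsHermitian) (f : ℝ → ℝ) : (cfc f A).trace = ∑ i, f (hA.eigenvalues i) := by
  rw [hA.cfc_eq, IsHermitian.cfc, Unitary.conjStarAlgAut_apply, trace_mul_cycle,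
    Unitary.star_mul_self_of_mem hA.eigenvectorUnitary.2, Matrix.one_mul, trace_diagonal]
  rfl

section Dilation

variable {m n : ℕ}

def dilation {R : Type*} [Zero R] (M : Matrix (Fin m) (Fin n) R) :
    Matrix (Fin (n + m)) (Fin (n + m)) R :=
  reindex finSumFinEquiv finSumFinEquiv (fromBlocks 0 Mᵀ M 0)

lemma dilation_add {R : Type*} [AddZeroClass R] (M M' : Matrix (Fin m) (Fin n) R) :
    (M + M').dilation = M.dilation + M'.dilation := by
  ext i j
  obtain ⟨i | i, rfl⟩ := finSumFinEquiv.surjective i <;>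
    obtain ⟨j | j, rfl⟩ := finSumFinEquiv.surjective j <;> simp [dilation]

variable {R : Type*} [CommRing R]

lemma charpoly_comp {k : Type*} [Fintype k] [DecidableEq k] (K : Matrix k k R) (p : R[X]) :
    K.charpoly.comp p = (p • 1 - K.map C).det := by
  rw [charpoly, ← coe_compRingHom_apply, RingHom.map_det]
  congr 1
  ext i j
  by_cases h : i = j <;> simp [h]

/-- Multiplying the characteristic matrix on the right by `[[X, 0], [M, X]]` makes it block upper
triangular with diagonal blocks `X² - MᵀM` and `X²`. -/
lemma charpoly_dilation (M : Matrix (Fin m) (Fin n) R) :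
    X ^ (n + m) * M.dilation.charpoly = X ^ (2 * m) * (Mᵀ * M).charpoly.comp (X ^ 2) := by
  have hprod : (fromBlocks 0 Mᵀ M 0).charmatrix *
        fromBlocks ((X : R[X]) • 1) 0 (M.map C) ((X : R[X]) • 1) =
      fromBlocks ((X ^ 2 : R[X]) • 1 - (Mᵀ * M).map C) (-(X : R[X]) • Mᵀ.map C) 0
        ((X ^ 2 : R[X]) • 1) := by
    rw [charmatrix_fromBlocks, fromBlocks_multiply]
    simp only [charmatrix, scalar_apply, ← smul_one_eq_diagonal]
    simp [sq, Matrix.map_mul, smul_smul, sub_eq_add_neg]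
  have hdet := congrArg det hprod
  rw [det_mul, det_fromBlocks_zero₁₂, det_fromBlocks_zero₂₁] at hdet
  rw [dilation, charpoly_reindex, charpoly_comp, charpoly]
  simp only [det_smul, det_one, Fintype.card_fin, mul_one, ← pow_mul] at hdet
  linear_combination hdet

end Dilation

namespace IsHermitian

variable {N : ℕ} {A B : Matrix (Fin N) (Fin N) ℝ}

noncomputable def eigenvalueOrder (hA : A.IsHermitian) : Equiv.Perm (Fin N) :=
  Fin.revPerm.trans (Tuple.sort hA.eigenvalues)

noncomputable def sortedEigenvalues (hA : A.IsHermitian) : Fin N → ℝ :=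
  hA.eigenvalues ∘ hA.eigenvalueOrder

noncomputable def eigenCoords (hA : A.IsHermitian) (x : Fin N → ℝ) : Fin N → ℝ :=
  (star (hA.eigenvectorUnitary : Matrix (Fin N) (Fin N) ℝ) *ᵥ x) ∘ hA.eigenvalueOrder

lemma sortedEigenvalues_antitone (hA : A.IsHermitian) : Antitone hA.sortedEigenvalues :=
  fun _ _ hij => Tuple.monotone_sort hA.eigenvalues (Fin.rev_le_rev.mpr hij)

lemma sum_comp_sortedEigenvalues (hA : A.IsHermitian) (f : ℝ → ℝ) :
    ∑ i, f (hA.sortedEigenvalues i) = ∑ i, f (hA.eigenvalues i) :=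
  Equiv.sum_comp hA.eigenvalueOrder (f ∘ hA.eigenvalues)

lemma trace_eq_sum_sortedEigenvalues (hA : A.IsHermitian) :
    A.trace = ∑ i, hA.sortedEigenvalues i := by
  simpa using (hA.sum_comp_sortedEigenvalues id).trans hA.trace_eq_sum_eigenvalues.symm |>.symm

lemma charpoly_eq_prod_sortedEigenvalues (hA : A.IsHermitian) :
    A.charpoly = ∏ i, (X - C (hA.sortedEigenvalues i)) := by
  rw [hA.charpoly_eq]
  exact (Equiv.prod_comp hA.eigenvalueOrder fun i => X - C (hA.eigenvalues i)).symm

lemma sortedEigenvalues_eq_of_charpoly_eq (hA : A.IsHermitian) {f : Fin N → ℝ}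
    (hf : Antitone f) (h : A.charpoly = ∏ i, (X - C (f i))) : hA.sortedEigenvalues = f := by
  have roots_prod : ∀ g : Fin N → ℝ, (∏ i, (X - C (g i))).roots = ↑(List.ofFn g) := fun g => by
    rw [roots_prod _ _ (Finset.prod_ne_zero_iff.mpr fun i _ => X_sub_C_ne_zero _)]
    simp [Fin.univ_val_map]
  have hperm : (List.ofFn hA.sortedEigenvalues).Perm (List.ofFn f) := by
    rw [← Multiset.coe_eq_coe, ← roots_prod, ← roots_prod, ← h,
      hA.charpoly_eq_prod_sortedEigenvalues]
  exact List.ofFn_injective <| hperm.eq_of_pairwise'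
    hA.sortedEigenvalues_antitone.sortedGE_ofFn.pairwise hf.sortedGE_ofFn.pairwise

lemma rank_eq_card_sortedEigenvalues_ne_zero (hA : A.IsHermitian) :
    A.rank = Fintype.card {i // hA.sortedEigenvalues i ≠ 0} := by
  rw [hA.rank_eq_card_non_zero_eigs]
  exact Fintype.card_congr (hA.eigenvalueOrder.subtypeEquiv fun _ => Iff.rfl).symm

lemma dotProduct_mulVec_eq_sum_sortedEigenvalues (hA : A.IsHermitian) (x : Fin N → ℝ) :
    x ⬝ᵥ (A *ᵥ x) = ∑ j, hA.sortedEigenvalues j * hA.eigenCoords x j ^ 2 := by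
  conv_lhs => rw [hA.spectral_theorem, Unitary.conjStarAlgAut_apply,
    dotProduct_mul_mul_star_mulVec]
  refine Eq.trans ?_ (Equiv.sum_comp hA.eigenvalueOrder
    fun i => hA.eigenvalues i * (star (hA.eigenvectorUnitary : Matrix _ _ ℝ) *ᵥ x) i ^ 2).symm
  simp only [dotProduct, mulVec_diagonal, Function.comp_apply, RCLike.ofReal_real_eq_id, id]
  exact Finset.sum_congr rfl fun i _ => by ring

lemma dotProduct_self_eq_sum_eigenCoords (hA : A.IsHermitian) (x : Fin N → ℝ) :
    x ⬝ᵥ x = ∑ j, hA.eigenCoords x j ^ 2 := by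
  have h := dotProduct_mul_mul_star_mulVec (hA.eigenvectorUnitary : Matrix (Fin N) (Fin N) ℝ) 1 x
  rw [Matrix.mul_one, Unitary.mul_star_self_of_mem hA.eigenvectorUnitary.2, one_mulVec,
    one_mulVec] at h
  rw [h, dotProduct, ← Equiv.sum_comp hA.eigenvalueOrder]
  simp only [eigenCoords, Function.comp_apply, sq]

lemma sortedEigenvalues_mul_le_dotProduct_mulVec (hA : A.IsHermitian) {x : Fin N → ℝ}
    {k : Fin N} (hx : ∀ j, k < j → hA.eigenCoords x j = 0) :
    hA.sortedEigenvalues k * (x ⬝ᵥ x) ≤ x ⬝ᵥ (A *ᵥ x) := by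
  rw [hA.dotProduct_self_eq_sum_eigenCoords, hA.dotProduct_mulVec_eq_sum_sortedEigenvalues,
    Finset.mul_sum]
  refine Finset.sum_le_sum fun j _ => ?_
  rcases le_or_gt j k with hjk | hkj
  · exact mul_le_mul_of_nonneg_right (hA.sortedEigenvalues_antitone hjk) (sq_nonneg _)
  · simp [hx j hkj]

lemma dotProduct_mulVec_le_sortedEigenvalues_mul (hA : A.IsHermitian) {x : Fin N → ℝ}
    {k : Fin N} (hx : ∀ j, j < k → hA.eigenCoords x j = 0) :
    x ⬝ᵥ (A *ᵥ x) ≤ hA.sortedEigenvalues k * (x ⬝ᵥ x) := by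
  rw [hA.dotProduct_self_eq_sum_eigenCoords, hA.dotProduct_mulVec_eq_sum_sortedEigenvalues,
    Finset.mul_sum]
  refine Finset.sum_le_sum fun j _ => ?_
  rcases lt_or_ge j k with hjk | hkj
  · simp [hx j hjk]
  · exact mul_le_mul_of_nonneg_right (hA.sortedEigenvalues_antitone hkj) (sq_nonneg _)

/-- Weyl's monotonicity principle. A test vector `x` orthogonal to the eigenvectors of `B` before
position `k` and to those of `A` after it has Rayleigh quotients
`λₖ(A) ≤ xᵀAx / xᵀx ≤ xᵀBx / xᵀx ≤ λₖ(B)`. -/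
theorem sortedEigenvalues_le_of_le (hA : A.IsHermitian) (hB : B.IsHermitian) (hAB : A ≤ B)
    (k : Fin N) : hA.sortedEigenvalues k ≤ hB.sortedEigenvalues k := by
  obtain ⟨x, hx0, hx⟩ := exists_ne_zero_forall_dotProduct_eq_zero (fun i =>
    if i < k then star (hB.eigenvectorUnitary : Matrix (Fin N) (Fin N) ℝ) (hB.eigenvalueOrder i)
    else star (hA.eigenvectorUnitary : Matrix (Fin N) (Fin N) ℝ) (hA.eigenvalueOrder i)) k
  have hxB : ∀ j, j < k → hB.eigenCoords x j = 0 := fun j hj => by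
    have h := hx j hj.ne
    rw [if_pos hj] at h
    exact h
  have hxA : ∀ j, k < j → hA.eigenCoords x j = 0 := fun j hj => by
    have h := hx j hj.ne'
    rw [if_neg hj.not_gt] at h
    exact h
  have hAxB : x ⬝ᵥ (A *ᵥ x) ≤ x ⬝ᵥ (B *ᵥ x) := by
    have h := (le_iff.mp hAB).dotProduct_mulVec_nonneg x
    rwa [star_trivial, sub_mulVec, dotProduct_sub, sub_nonneg] at h
  have hxx : 0 < x ⬝ᵥ x := lt_of_le_of_ne (Finset.sum_nonneg fun i _ => mul_self_nonneg (x i))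
    (Ne.symm (mt dotProduct_self_eq_zero.mp hx0))
  refine le_of_mul_le_mul_right ?_ hxx
  calc hA.sortedEigenvalues k * (x ⬝ᵥ x) ≤ x ⬝ᵥ (A *ᵥ x) :=
        hA.sortedEigenvalues_mul_le_dotProduct_mulVec hxA
    _ ≤ x ⬝ᵥ (B *ᵥ x) := hAxB
    _ ≤ hB.sortedEigenvalues k * (x ⬝ᵥ x) := hB.dotProduct_mulVec_le_sortedEigenvalues_mul hxB

lemma sum_sub_sortedEigenvalues_le_trace (hA : A.IsHermitian) (hB : B.IsHermitian)
    {D : Matrix (Fin N) (Fin N) ℝ} (hD : 0 ≤ D) (hABD : A - B ≤ D) (S : Finset (Fin N)) :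
    ∑ i ∈ S, (hA.sortedEigenvalues i - hB.sortedEigenvalues i) ≤ D.trace := by
  have hBD : (B + D).IsHermitian := hB.add (nonneg_iff_posSemidef.mp hD).isHermitian
  have hA_le : ∀ i, hA.sortedEigenvalues i ≤ hBD.sortedEigenvalues i :=
    sortedEigenvalues_le_of_le hA hBD (sub_le_iff_le_add'.mp hABD)
  have hB_le : ∀ i, hB.sortedEigenvalues i ≤ hBD.sortedEigenvalues i :=
    sortedEigenvalues_le_of_le hB hBD (le_add_of_nonneg_right hD)
  calc ∑ i ∈ S, (hA.sortedEigenvalues i - hB.sortedEigenvalues i)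
      ≤ ∑ i ∈ S, (hBD.sortedEigenvalues i - hB.sortedEigenvalues i) :=
        Finset.sum_le_sum fun i _ => sub_le_sub_right (hA_le i) _
    _ ≤ ∑ i, (hBD.sortedEigenvalues i - hB.sortedEigenvalues i) :=
        Finset.sum_le_sum_of_subset_of_nonneg (Finset.subset_univ S)
          fun i _ _ => sub_nonneg.mpr (hB_le i)
    _ = D.trace := by
        rw [Finset.sum_sub_distrib, ← hBD.trace_eq_sum_sortedEigenvalues,
          ← hB.trace_eq_sum_sortedEigenvalues, trace_add, add_sub_cancel_left]

theorem sum_abs_sub_sortedEigenvalues_le (hA : A.IsHermitian) (hB : B.IsHermitian)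
    {C : Matrix (Fin N) (Fin N) ℝ} (hC : C.IsHermitian) (hABC : A - B = C) :
    ∑ i, |hA.sortedEigenvalues i - hB.sortedEigenvalues i| ≤ ∑ i, |hC.sortedEigenvalues i| := by
  set P := cfc (fun t : ℝ => max t 0) C
  have hP : 0 ≤ P := cfc_nonneg fun t _ => le_max_right t 0
  have hCP : C ≤ P := by
    conv_lhs => rw [← cfc_id' ℝ C]
    exact cfc_mono fun t _ => le_max_left t 0
  set S := Finset.univ.filter fun i => hB.sortedEigenvalues i ≤ hA.sortedEigenvalues i
  have hS := sum_sub_sortedEigenvalues_le_trace hA hB hP (hABC ▸ hCP) S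
  have hSc := sum_sub_sortedEigenvalues_le_trace hB hA (sub_nonneg.mpr hCP)
    (by rw [← neg_sub, hABC, sub_eq_neg_add]; exact le_add_of_nonneg_right hP) Sᶜ
  have hsplit : ∑ i, |hA.sortedEigenvalues i - hB.sortedEigenvalues i| =
      ∑ i ∈ S, (hA.sortedEigenvalues i - hB.sortedEigenvalues i) +
        ∑ i ∈ Sᶜ, (hB.sortedEigenvalues i - hA.sortedEigenvalues i) := by
    rw [← Finset.sum_add_sum_compl S]
    congr 1 <;> refine Finset.sum_congr rfl fun i hi => ?_ <;> simp only [S, Finset.mem_compl,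
      Finset.mem_filter, Finset.mem_univ, true_and, not_le] at hi
    · exact abs_of_nonneg (sub_nonneg.mpr hi)
    · exact abs_of_neg (sub_neg.mpr hi) |>.trans (neg_sub _ _)
  calc ∑ i, |hA.sortedEigenvalues i - hB.sortedEigenvalues i|
      ≤ P.trace + (P - C).trace := hsplit ▸ add_le_add hS hSc
    _ = ∑ i, (2 * max (hC.eigenvalues i) 0 - hC.eigenvalues i) := by
        rw [trace_sub, hC.trace_cfc, hC.trace_eq_sum_eigenvalues, ← Finset.sum_sub_distrib,
          ← Finset.sum_add_distrib]
        simp only [RCLike.ofReal_real_eq_id, id]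
        exact Finset.sum_congr rfl fun i _ => by ring
    _ = ∑ i, |hC.sortedEigenvalues i| := by
        rw [hC.sum_comp_sortedEigenvalues abs]
        exact Finset.sum_congr rfl fun i _ => by
          rcases le_total (hC.eigenvalues i) 0 with h | h
          · rw [max_eq_right h, abs_of_nonpos h]; ring
          · rw [max_eq_left h, abs_of_nonneg h]; ring

end IsHermitian

end Matrix

section ZeroPad

variable {n : ℕ}

def zeroPad {α : Type*} [Zero α] (m : ℕ) (p : Fin n → α) : Fin (n + m) → α :=
  fun k => if h : (k : ℕ) < n then p ⟨k, h⟩ else 0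

/-- The eigenvalues of `dilation M` in nonincreasing order, when `p` lists the singular values
of `M`. -/
def dilationSpectrum (m : ℕ) (p : Fin n → ℝ) : Fin (n + m) → ℝ :=
  fun k => zeroPad m p k - zeroPad m p k.rev

variable {m : ℕ} {α : Type*}

@[to_additive]
lemma prod_comp_zeroPad [Zero α] {M : Type*} [CommMonoid M] (f : α → M) (p : Fin n → α) :
    ∏ k, f (zeroPad m p k) = (∏ i, f (p i)) * f 0 ^ m := by
  simp [Fin.prod_univ_add, zeroPad]

lemma zeroPad_sub [AddGroup α] (p q : Fin n → α) :
    zeroPad m (p - q) = zeroPad m p - zeroPad m q := by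
  ext k
  simp only [zeroPad, Pi.sub_apply]
  split_ifs <;> simp

lemma zeroPad_antitone [Preorder α] [Zero α] {p : Fin n → α} (hp : Antitone p)
    (hp0 : ∀ i, 0 ≤ p i) : Antitone (zeroPad m p) := by
  intro k l hkl
  have hkl' : (k : ℕ) ≤ l := hkl
  unfold zeroPad
  split_ifs with hl hk hk
  · exact hp (Fin.mk_le_mk.mpr hkl')
  · omega
  · exact hp0 _
  · rfl

lemma zeroPad_mul_zeroPad_rev [MulZeroClass α] {p : Fin n → α}
    (hp : ∀ j : Fin n, m ≤ (j : ℕ) → p j = 0) (k : Fin (n + m)) :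
    zeroPad m p k * zeroPad m p k.rev = 0 := by
  unfold zeroPad
  split_ifs with hk hrev
  · rw [hp ⟨k, hk⟩ (by rw [Fin.val_rev] at hrev; change m ≤ (k : ℕ); omega), zero_mul]
  all_goals simp

lemma dilationSpectrum_sub (p q : Fin n → ℝ) :
    dilationSpectrum m (p - q) = dilationSpectrum m p - dilationSpectrum m q := by
  ext k
  simp only [dilationSpectrum, zeroPad_sub, Pi.sub_apply]
  ring

lemma dilationSpectrum_antitone {p : Fin n → ℝ} (hp : Antitone p) (hp0 : ∀ i, 0 ≤ p i) :
    Antitone (dilationSpectrum m p) := fun _ _ hkl =>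
  sub_le_sub (zeroPad_antitone hp hp0 hkl) (zeroPad_antitone hp hp0 (Fin.rev_le_rev.mpr hkl))

lemma sum_abs_dilationSpectrum {p : Fin n → ℝ} (hp : ∀ j : Fin n, m ≤ (j : ℕ) → p j = 0) :
    ∑ k, |dilationSpectrum m p k| = 2 * ∑ i, |p i| := by
  have habs : ∀ k, |dilationSpectrum m p k| = |zeroPad m p k| + |zeroPad m p k.rev| := fun k => by
    rcases mul_eq_zero.mp (zeroPad_mul_zeroPad_rev hp k) with h | h <;>
      simp [dilationSpectrum, h]
  rw [Finset.sum_congr rfl fun k _ => habs k, Finset.sum_add_distrib,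
    Fintype.sum_equiv Fin.revPerm (fun k => |zeroPad m p k.rev|) (fun k => |zeroPad m p k|)
      fun _ => rfl,
    sum_comp_zeroPad abs]
  simp [two_mul]

lemma X_pow_mul_prod_dilationSpectrum {p : Fin n → ℝ}
    (hp : ∀ j : Fin n, m ≤ (j : ℕ) → p j = 0) :
    X ^ (n + m) * ∏ k, (X - C (dilationSpectrum m p k)) =
      X ^ (2 * m) * ∏ i, (X ^ 2 - C (p i ^ 2)) := by
  have hfactor : ∀ k, X * (X - C (dilationSpectrum m p k)) =
      (X - C (zeroPad m p k)) * (X + C (zeroPad m p k.rev)) := fun k => by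
    have h := congrArg C (zeroPad_mul_zeroPad_rev hp k)
    rw [C_mul, C_0] at h
    simp only [dilationSpectrum, C_sub]
    linear_combination h
  calc X ^ (n + m) * ∏ k, (X - C (dilationSpectrum m p k))
      = (∏ k, (X - C (zeroPad m p k))) * ∏ k, (X + C (zeroPad m p k)) := by
        rw [← Fintype.prod_equiv Fin.revPerm (fun k => X + C (zeroPad m p k.rev))
            (fun k => X + C (zeroPad m p k)) fun _ => rfl,
          ← Finset.prod_mul_distrib, ← Finset.prod_congr rfl fun k _ => hfactor k,
          Finset.prod_mul_distrib, Finset.prod_const, Finset.card_univ, Fintype.card_fin]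
    _ = X ^ (2 * m) * ∏ i, (X ^ 2 - C (p i ^ 2)) := by
        rw [prod_comp_zeroPad (fun a : ℝ => (X - C a : ℝ[X])),
          prod_comp_zeroPad (fun a : ℝ => (X + C a : ℝ[X]))]
        simp only [map_zero, sub_zero, add_zero, C_pow]
        rw [show ∏ i, (X ^ 2 - C (p i) ^ 2) = ∏ i, ((X - C (p i)) * (X + C (p i))) from
          Finset.prod_congr rfl fun i _ => by ring, Finset.prod_mul_distrib]
        ring

end ZeroPad

section SingularValues

variable {m n : ℕ}

lemma singularValues_apply (M : Matrix (Fin m) (Fin n) ℝ) (i : Fin n) :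
    singularValues M i = √((isHermitian_transpose_mul_self M).sortedEigenvalues i) :=
  rfl

lemma sortedEigenvalues_transpose_mul_self_nonneg (M : Matrix (Fin m) (Fin n) ℝ) (i : Fin n) :
    0 ≤ (isHermitian_transpose_mul_self M).sortedEigenvalues i :=
  (posSemidef_conjTranspose_mul_self M).eigenvalues_nonneg _

lemma singularValues_nonneg (M : Matrix (Fin m) (Fin n) ℝ) (i : Fin n) :
    0 ≤ singularValues M i :=
  Real.sqrt_nonneg _

lemma singularValues_antitone (M : Matrix (Fin m) (Fin n) ℝ) : Antitone (singularValues M) :=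
  fun _ _ hij =>
    Real.sqrt_le_sqrt ((isHermitian_transpose_mul_self M).sortedEigenvalues_antitone hij)

lemma sq_singularValues (M : Matrix (Fin m) (Fin n) ℝ) (i : Fin n) :
    singularValues M i ^ 2 = (isHermitian_transpose_mul_self M).sortedEigenvalues i :=
  Real.sq_sqrt (sortedEigenvalues_transpose_mul_self_nonneg M i)

/-- The singular values `σ₀ ≥ … ≥ σⱼ` are all nonzero if `σⱼ` is, while only
`rank (MᵀM) ≤ m` of them are. -/
lemma singularValues_eq_zero_of_le (M : Matrix (Fin m) (Fin n) ℝ) {j : Fin n}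
    (hj : m ≤ (j : ℕ)) : singularValues M j = 0 := by
  set hK := isHermitian_transpose_mul_self M
  rw [singularValues_apply, Real.sqrt_eq_zero (sortedEigenvalues_transpose_mul_self_nonneg M j)]
  by_contra hj0
  have hpos : 0 < hK.sortedEigenvalues j :=
    (sortedEigenvalues_transpose_mul_self_nonneg M j).lt_of_ne' hj0
  have hcard : (j : ℕ) + 1 ≤ Fintype.card {i // hK.sortedEigenvalues i ≠ 0} := by
    rw [← Fin.card_Iic, Fintype.card_subtype]
    exact Finset.card_le_card fun i hi => Finset.mem_filter.mpr ⟨Finset.mem_univ i,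
      (hpos.trans_le (hK.sortedEigenvalues_antitone (Finset.mem_Iic.mp hi))).ne'⟩
  have hrank : (Mᵀ * M).rank ≤ m := (rank_transpose_mul_self M).trans_le (rank_le_height M)
  rw [hK.rank_eq_card_sortedEigenvalues_ne_zero] at hrank
  omega

lemma charpoly_transpose_mul_self (M : Matrix (Fin m) (Fin n) ℝ) :
    (Mᵀ * M).charpoly = ∏ i, (X - C (singularValues M i ^ 2)) := by
  simp only [sq_singularValues]
  exact (isHermitian_transpose_mul_self M).charpoly_eq_prod_sortedEigenvalues

lemma isHermitian_dilation (M : Matrix (Fin m) (Fin n) ℝ) : M.dilation.IsHermitian := by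
  rw [IsHermitian, dilation, conjTranspose_reindex, fromBlocks_conjTranspose]
  simp [conjTranspose_eq_transpose_of_trivial]

theorem sortedEigenvalues_dilation (M : Matrix (Fin m) (Fin n) ℝ)
    (hM : M.dilation.IsHermitian) :
    hM.sortedEigenvalues = dilationSpectrum m (singularValues M) := by
  refine hM.sortedEigenvalues_eq_of_charpoly_eq
    (dilationSpectrum_antitone (singularValues_antitone M) (singularValues_nonneg M)) ?_
  refine mul_left_cancel₀ (pow_ne_zero (n + m) X_ne_zero) ?_
  rw [charpoly_dilation, charpoly_transpose_mul_self, prod_comp,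
    X_pow_mul_prod_dilationSpectrum fun j => singularValues_eq_zero_of_le M]
  simp

end SingularValues

/-- Mirsky-type singular value perturbation inequality:
`Σ_i |σ_i(X+E) − σ_i(X)| ≤ Σ_i σ_i(E) = ‖E‖*`. -/
theorem mirsky_singular_value_perturbation (m n : ℕ) (X E : Matrix (Fin m) (Fin n) ℝ) :
    ∑ i, |singularValues (X + E) i - singularValues X i| ≤ nuclearNorm E := by
  have key := IsHermitian.sum_abs_sub_sortedEigenvalues_le (isHermitian_dilation (X + E))
    (isHermitian_dilation X) (isHermitian_dilation E) (by rw [dilation_add, add_sub_cancel_left])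
  simp only [sortedEigenvalues_dilation, ← Pi.sub_apply (dilationSpectrum m _),
    ← dilationSpectrum_sub] at key
  rw [sum_abs_dilationSpectrum fun j hj => by simp [singularValues_eq_zero_of_le _ hj],
    sum_abs_dilationSpectrum fun j => singularValues_eq_zero_of_le E] at key
  simp only [Pi.sub_apply, abs_of_nonneg (singularValues_nonneg E _)] at key
  rw [nuclearNorm]
  linarith
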